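/- For every ε with 0 < ε² < 1/(4√3), the cubic equation P(π, y, ε) = y²/2 - (2/3)ε²y³ - 2 = 0 has three distinct real roots given in closed form by y₀ = √3 / cos((π - arccos(4√3 ε²))/3), y₁ = √3 / cos((π + arccos(4√3 ε²))/3), y₂ = -√3 / cos(arccos(4√3 ε²)/3). -/

import Mathlib

/-!
Substituting `y = √3 / c` turns `y²/2 - (2/3) ε² y³ - 2 = 0` into `4c³ - 3c = -4√3 ε²`, which by
`cos 3θ = 4 cos³ θ - 3 cos θ` is solved by `c = cos((π ∓ a)/3)` and `c = -cos(a/3)` whenever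
`cos a = 4√3 ε²`. For `0 < a < π/2` these three cosines are nonzero and give three distinct roots,
and a cubic with three distinct roots has no others.
-/

open Real

theorem cubic_eq_mul_sub_mul_sub_mul_sub {R : Type*} [CommRing R] [IsDomain R]
    {a b c d r₀ r₁ r₂ : R} (h₀₁ : r₀ ≠ r₁) (h₀₂ : r₀ ≠ r₂) (h₁₂ : r₁ ≠ r₂)
    (hr₀ : a * r₀ ^ 3 + b * r₀ ^ 2 + c * r₀ + d = 0)
    (hr₁ : a * r₁ ^ 3 + b * r₁ ^ 2 + c * r₁ + d = 0)
    (hr₂ : a * r₂ ^ 3 + b * r₂ ^ 2 + c * r₂ + d = 0) (y : R) :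
    a * y ^ 3 + b * y ^ 2 + c * y + d = a * (y - r₀) * (y - r₁) * (y - r₂) := by
  have e₀₁ : a * (r₀ ^ 2 + r₀ * r₁ + r₁ ^ 2) + b * (r₀ + r₁) + c = 0 := by
    refine (mul_eq_zero.mp ?_).resolve_left (sub_ne_zero.mpr h₀₁)
    linear_combination hr₀ - hr₁
  have e₀₂ : a * (r₀ ^ 2 + r₀ * r₂ + r₂ ^ 2) + b * (r₀ + r₂) + c = 0 := by
    refine (mul_eq_zero.mp ?_).resolve_left (sub_ne_zero.mpr h₀₂)
    linear_combination hr₀ - hr₂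
  have hsum : a * (r₀ + r₁ + r₂) + b = 0 := by
    refine (mul_eq_zero.mp ?_).resolve_left (sub_ne_zero.mpr h₁₂)
    linear_combination e₀₁ - e₀₂
  obtain rfl : b = -a * (r₀ + r₁ + r₂) := by linear_combination hsum
  obtain rfl : c = a * (r₀ * r₁ + r₀ * r₂ + r₁ * r₂) := by linear_combination e₀₁
  obtain rfl : d = -a * r₀ * r₁ * r₂ := by linear_combination hr₀
  ring

theorem eq_or_eq_or_eq_of_cubic_eq_zero {R : Type*} [CommRing R] [IsDomain R]
    {a b c d r₀ r₁ r₂ y : R} (ha : a ≠ 0) (h₀₁ : r₀ ≠ r₁) (h₀₂ : r₀ ≠ r₂) (h₁₂ : r₁ ≠ r₂)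
    (hr₀ : a * r₀ ^ 3 + b * r₀ ^ 2 + c * r₀ + d = 0)
    (hr₁ : a * r₁ ^ 3 + b * r₁ ^ 2 + c * r₁ + d = 0)
    (hr₂ : a * r₂ ^ 3 + b * r₂ ^ 2 + c * r₂ + d = 0)
    (hy : a * y ^ 3 + b * y ^ 2 + c * y + d = 0) : y = r₀ ∨ y = r₁ ∨ y = r₂ := by
  rw [cubic_eq_mul_sub_mul_sub_mul_sub h₀₁ h₀₂ h₁₂ hr₀ hr₁ hr₂] at hy
  simpa only [mul_eq_zero, ha, sub_eq_zero, false_or, or_assoc] using hy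

theorem four_mul_cube_sub_three_mul_eq_neg_cos (a : ℝ) :
    4 * cos ((π - a) / 3) ^ 3 - 3 * cos ((π - a) / 3) = -cos a ∧
    4 * cos ((π + a) / 3) ^ 3 - 3 * cos ((π + a) / 3) = -cos a ∧
    4 * (-cos (a / 3)) ^ 3 - 3 * -cos (a / 3) = -cos a := by
  refine ⟨?_, ?_, ?_⟩
  · rw [← cos_three_mul, mul_div_cancel₀ _ three_ne_zero, cos_pi_sub]
  · rw [← cos_three_mul, mul_div_cancel₀ _ three_ne_zero, add_comm, cos_add_pi]
  · have h := cos_three_mul (a / 3)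
    rw [mul_div_cancel₀ _ three_ne_zero] at h
    linear_combination h

theorem viete_cosines_pos_and_lt {a : ℝ} (ha₀ : 0 < a) (ha₁ : a < π / 2) :
    0 < cos ((π + a) / 3) ∧ cos ((π + a) / 3) < cos ((π - a) / 3) ∧ 0 < cos (a / 3) := by
  have hπ := pi_pos
  refine ⟨cos_pos_of_mem_Ioo ⟨by linarith, by linarith⟩,
    cos_lt_cos_of_nonneg_of_le_pi (by linarith) (by linarith) (by linarith),
    cos_pos_of_mem_Ioo ⟨by linarith, by linarith⟩⟩

theorem sqrt_three_div_root_of_four_mul_cube_sub_three_mul {ε c : ℝ} (hc : c ≠ 0)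
    (h : 4 * c ^ 3 - 3 * c = -(4 * √3 * ε ^ 2)) :
    (√3 / c) ^ 2 / 2 - (2 / 3) * ε ^ 2 * (√3 / c) ^ 3 - 2 = 0 := by
  have hs : √3 ^ 2 = 3 := sq_sqrt (by norm_num)
  have hs' : √3 ^ 3 = 3 * √3 := by rw [pow_succ, hs]
  rw [div_pow, div_pow, hs, hs']
  field_simp
  linear_combination -h

/-- For `0 < ε² < 1/(4√3)`, the cubic `y²/2 - (2/3) ε² y³ - 2 = 0` has exactly three
distinct real roots, given by the trigonometric (Viète) formulas
`y₀ = √3 / cos((π - arccos(4√3 ε²))/3)`, `y₁ = √3 / cos((π + arccos(4√3 ε²))/3)`,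
`y₂ = -√3 / cos(arccos(4√3 ε²)/3)`. -/
theorem amended_pendulum_roots (ε : ℝ) (hε : 0 < ε)
    (hε2 : ε ^ 2 < 1 / (4 * Real.sqrt 3)) :
    let a := Real.arccos (4 * Real.sqrt 3 * ε ^ 2)
    let y0 := Real.sqrt 3 / Real.cos ((Real.pi - a) / 3)
    let y1 := Real.sqrt 3 / Real.cos ((Real.pi + a) / 3)
    let y2 := -(Real.sqrt 3 / Real.cos (a / 3))
    (y0 ^ 2 / 2 - (2 / 3) * ε ^ 2 * y0 ^ 3 - 2 = 0) ∧
    (y1 ^ 2 / 2 - (2 / 3) * ε ^ 2 * y1 ^ 3 - 2 = 0) ∧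
    (y2 ^ 2 / 2 - (2 / 3) * ε ^ 2 * y2 ^ 3 - 2 = 0) ∧
    y0 ≠ y1 ∧ y0 ≠ y2 ∧ y1 ≠ y2 ∧
    (∀ y : ℝ, y ^ 2 / 2 - (2 / 3) * ε ^ 2 * y ^ 3 - 2 = 0 → y = y0 ∨ y = y1 ∨ y = y2) := by
  intro a y0 y1 y2
  have ht₀ : 0 < 4 * √3 * ε ^ 2 := by positivity
  have ht₁ : 4 * √3 * ε ^ 2 < 1 := by
    rwa [lt_div_iff₀ (by positivity), mul_comm] at hε2
  obtain ⟨hc₁, hc₀₁, hc₂⟩ :=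
    viete_cosines_pos_and_lt (arccos_pos.mpr ht₁) (arccos_lt_pi_div_two.mpr ht₀)
  have hc₀ := hc₁.trans hc₀₁
  obtain ⟨v₀, v₁, v₂⟩ := four_mul_cube_sub_three_mul_eq_neg_cos a
  rw [cos_arccos (by linarith) ht₁.le] at v₀ v₁ v₂
  have h₀ := sqrt_three_div_root_of_four_mul_cube_sub_three_mul hc₀.ne' v₀
  have h₁ := sqrt_three_div_root_of_four_mul_cube_sub_three_mul hc₁.ne' v₁
  have h₂ : y2 ^ 2 / 2 - (2 / 3) * ε ^ 2 * y2 ^ 3 - 2 = 0 := by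
    rw [show y2 = √3 / -cos (a / 3) from (div_neg _).symm]
    exact sqrt_three_div_root_of_four_mul_cube_sub_three_mul (neg_ne_zero.mpr hc₂.ne') v₂
  have hs : 0 < √3 := by positivity
  have hy₀₁ : y0 < y1 := div_lt_div_of_pos_left hs hc₁ hc₀₁
  have hy₂ : y2 < 0 := neg_neg_of_pos (div_pos hs hc₂)
  have hy₀ : 0 < y0 := div_pos hs hc₀
  have hne₀₂ : y0 ≠ y2 := (hy₂.trans hy₀).ne'
  have hne₁₂ : y1 ≠ y2 := (hy₂.trans (hy₀.trans hy₀₁)).ne'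
  refine ⟨h₀, h₁, h₂, hy₀₁.ne, hne₀₂, hne₁₂, fun y hy => ?_⟩
  have ha : -(2 / 3 * ε ^ 2) ≠ 0 := neg_ne_zero.mpr (by positivity)
  exact eq_or_eq_or_eq_of_cubic_eq_zero (b := 1 / 2) (c := 0) (d := -2) ha hy₀₁.ne hne₀₂ hne₁₂
    (by linear_combination h₀) (by linear_combination h₁) (by linear_combination h₂)
    (by linear_combination hy)
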